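/- There is a bijection between the set of quadrangular dissections of a convex 2n-gon and the set of ternary trees with n-1 internal vertices. -/
import Mathlib


/-- Arc length from `a` to `b` going counterclockwise around `Fin m`. -/
def arcd (m : ℕ) (a b : Fin m) : ℕ := (b.val + m - a.val) % m

/-- `x` lies strictly between `a` and `b` going counterclockwise. -/
def btwn (m : ℕ) (a x b : Fin m) : Prop := 0 < arcd m a x ∧ arcd m a x < arcd m a b

/-- Two chords of the convex `m`-gon cross in their interiors. -/
def Crosses (m : ℕ) (d e : Fin m × Fin m) : Prop :=
  (btwn m d.1 e.1 d.2 ∧ btwn m d.2 e.2 d.1) ∨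
  (btwn m d.1 e.2 d.2 ∧ btwn m d.2 e.1 d.1)

/-- `d` is a diagonal of the convex `m`-gon: its endpoints are distinct and non-adjacent. -/
def IsPolyDiagonal (m : ℕ) (d : Fin m × Fin m) : Prop :=
  arcd m d.1 d.2 ≠ 0 ∧ arcd m d.1 d.2 ≠ 1 ∧ arcd m d.2 d.1 ≠ 1

/-- `y` is the cyclic successor of `x` within the vertex set `C`. -/
def SuccIn (m : ℕ) (C : Finset (Fin m)) (x y : Fin m) : Prop :=
  x ∈ C ∧ y ∈ C ∧ y ≠ x ∧ ∀ z ∈ C, z ≠ x → arcd m x y ≤ arcd m x z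

/-- `C` is (the vertex set of) a cell of the dissection of the convex `m`-gon by
the diagonals `D`: consecutive vertices of `C` are joined by polygon edges or
diagonals of `D`, and no diagonal of `D` subdivides `C`. -/
def IsCell (m : ℕ) (D : Finset (Fin m × Fin m)) (C : Finset (Fin m)) : Prop :=
  3 ≤ C.card ∧
  (∀ x y : Fin m, SuccIn m C x y → arcd m x y = 1 ∨ (x, y) ∈ D ∨ (y, x) ∈ D) ∧
  ∀ d ∈ D, d.1 ∈ C → d.2 ∈ C → SuccIn m C d.1 d.2 ∨ SuccIn m C d.2 d.1

/-- A quadrangular dissection of a convex `2n`-gon: `n - 2` pairwise non-crossing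
diagonals, all of whose cells are quadrilaterals. -/
structure QDiss (n : ℕ) where
  diags : Finset (Fin (2*n) × Fin (2*n))
  ord : ∀ d ∈ diags, d.1 < d.2
  isDiag : ∀ d ∈ diags, IsPolyDiagonal (2*n) d
  noncross : ∀ d ∈ diags, ∀ e ∈ diags, ¬ Crosses (2*n) d e
  card_eq : diags.card = n - 2
  quad : ∀ C : Finset (Fin (2*n)), IsCell (2*n) diags C → C.card = 4

/-- Ternary trees: the free algebra on one generator `leaf` with one ternary
operation `node`. -/
inductive TernaryTree : Type
  | leaf : TernaryTree
  | node : TernaryTree → TernaryTree → TernaryTree → TernaryTree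
deriving DecidableEq

namespace TernaryTree

/-- Number of internal vertices (applications of the ternary operation). -/
def internal : TernaryTree → ℕ
  | leaf => 0
  | node a b c => internal a + internal b + internal c + 1

/-- The dual of a ternary tree. -/
def dual : TernaryTree → TernaryTree
  | leaf => leaf
  | node a b c => node (dual c) (dual b) (dual a)

end TernaryTree

section QDProof
open Finset

/-! ### Arithmetic lemmas about `arcd` and `btwn` -/

lemma arcd_eq_of_le {m : ℕ} {a b : Fin m} (h : a.val ≤ b.val) :
    arcd m a b = b.val - a.val := by
  have ha := a.isLt; have hb := b.isLt
  unfold arcd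
  have h2 : b.val + m - a.val = m + (b.val - a.val) := by omega
  rw [h2, Nat.add_mod_left, Nat.mod_eq_of_lt (by omega)]

lemma arcd_eq_of_gt {m : ℕ} {a b : Fin m} (h : b.val < a.val) :
    arcd m a b = m + b.val - a.val := by
  have ha := a.isLt; have hb := b.isLt
  unfold arcd
  have h2 : b.val + m - a.val = m + b.val - a.val := by omega
  rw [Nat.mod_eq_of_lt (by omega)]; omega

lemma btwn_iff_of_lt {m : ℕ} {a b : Fin m} (hab : a.val < b.val) (x : Fin m) :
    btwn m a x b ↔ a.val < x.val ∧ x.val < b.val := by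
  have ha := a.isLt; have hb := b.isLt; have hx := x.isLt
  unfold btwn
  rw [arcd_eq_of_le hab.le]
  rcases le_or_gt a.val x.val with h | h
  · rw [arcd_eq_of_le h]; omega
  · rw [arcd_eq_of_gt h]; omega

lemma btwn_iff_of_lt' {m : ℕ} {a b : Fin m} (hab : a.val < b.val) (x : Fin m) :
    btwn m b x a ↔ x.val < a.val ∨ b.val < x.val := by
  have ha := a.isLt; have hb := b.isLt; have hx := x.isLt
  unfold btwn
  rw [arcd_eq_of_gt hab]
  rcases le_or_gt b.val x.val with h | h
  · rw [arcd_eq_of_le h]; omega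
  · rw [arcd_eq_of_gt h]; omega

/-- Linear crossing of chords of naturals. -/
def LCross (d e : ℕ × ℕ) : Prop := d.1 < e.1 ∧ e.1 < d.2 ∧ d.2 < e.2

lemma crosses_iff {m : ℕ} {d e : Fin m × Fin m} (hd : d.1.val < d.2.val)
    (he : e.1.val < e.2.val) :
    Crosses m d e ↔
      LCross (d.1.val, d.2.val) (e.1.val, e.2.val) ∨
      LCross (e.1.val, e.2.val) (d.1.val, d.2.val) := by
  unfold Crosses LCross
  rw [btwn_iff_of_lt hd, btwn_iff_of_lt hd, btwn_iff_of_lt' hd, btwn_iff_of_lt' hd]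
  simp only
  omega

end QDProof
section QDProof2
open Finset

lemma succIn_iff {m : ℕ} (C : Finset (Fin m)) (x y : Fin m) :
    SuccIn m C x y ↔ x ∈ C ∧ y ∈ C ∧
      ((x.val < y.val ∧ ∀ z ∈ C, z.val ≤ x.val ∨ y.val ≤ z.val) ∨
       (y.val < x.val ∧ (∀ z ∈ C, y.val ≤ z.val) ∧ (∀ z ∈ C, z.val ≤ x.val))) := by
  have hx' := x.isLt; have hy' := y.isLt
  constructor
  · rintro ⟨hx, hy, hne, hmin⟩
    refine ⟨hx, hy, ?_⟩
    have hne' : y.val ≠ x.val := fun h => hne (Fin.ext h)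
    rcases lt_or_gt_of_ne hne' with hlt | hgt
    · -- y < x : wrap case
      right
      refine ⟨hlt, fun z hz => ?_, fun z hz => ?_⟩
      · by_contra hc
        push_neg at hc
        have hzx : z ≠ x := fun h => by omega
        have := hmin z hz hzx
        rw [arcd_eq_of_gt hlt, arcd_eq_of_gt (by omega : z.val < x.val)] at this
        omega
      · by_contra hc
        push_neg at hc
        have hzx : z ≠ x := fun h => by omega
        have := hmin z hz hzx
        have hz' := z.isLt
        rw [arcd_eq_of_gt hlt, arcd_eq_of_le (by omega : x.val ≤ z.val)] at this
        omega
    · -- x < y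
      left
      refine ⟨hgt, fun z hz => ?_⟩
      by_contra hc
      push_neg at hc
      have hzx : z ≠ x := fun h => by omega
      have := hmin z hz hzx
      rw [arcd_eq_of_le hgt.le, arcd_eq_of_le (by omega : x.val ≤ z.val)] at this
      omega
  · rintro ⟨hx, hy, hcase | hcase⟩
    · obtain ⟨hlt, hgap⟩ := hcase
      refine ⟨hx, hy, fun h => by simp [Fin.ext_iff] at h; omega, fun z hz hzx => ?_⟩
      have hz' := z.isLt
      have hzx' : z.val ≠ x.val := fun h => hzx (Fin.ext h)
      rw [arcd_eq_of_le hlt.le]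
      rcases le_or_gt x.val z.val with h | h
      · rw [arcd_eq_of_le h]
        rcases hgap z hz with h2 | h2 <;> omega
      · rw [arcd_eq_of_gt h]; omega
    · obtain ⟨hlt, hmin, hmax⟩ := hcase
      refine ⟨hx, hy, fun h => by simp [Fin.ext_iff] at h; omega, fun z hz hzx => ?_⟩
      have hz' := z.isLt
      have hzx' : z.val ≠ x.val := fun h => hzx (Fin.ext h)
      rw [arcd_eq_of_gt hlt]
      rcases le_or_gt x.val z.val with h | h
      · rw [arcd_eq_of_le h]
        have := hmax z hz; omega
      · rw [arcd_eq_of_gt h]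
        have := hmin z hz; omega

end QDProof2
section QDProof3
open Finset TernaryTree

/-! ### The linear framework -/

def SubI (D : Finset (ℕ × ℕ)) (a b : ℕ) : Prop :=
  ∀ d ∈ D, a ≤ d.1 ∧ d.1 + 2 ≤ d.2 ∧ d.2 ≤ b ∧ ¬(d.1 = a ∧ d.2 = b)

def NC (D : Finset (ℕ × ℕ)) : Prop := ∀ d ∈ D, ∀ e ∈ D, ¬ LCross d e

def ConsecIn (C : Finset ℕ) (x y : ℕ) : Prop :=
  x ∈ C ∧ y ∈ C ∧ x < y ∧ ∀ z ∈ C, z ≤ x ∨ y ≤ z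

def LCell (D : Finset (ℕ × ℕ)) (a b : ℕ) (C : Finset ℕ) : Prop :=
  C ⊆ Finset.Icc a b ∧ 3 ≤ C.card ∧
  (∀ x y, ConsecIn C x y → y = x + 1 ∨ (x, y) ∈ D ∨ (x = a ∧ y = b)) ∧
  (∀ u v, u ∈ C → v ∈ C → (∀ z ∈ C, u ≤ z ∧ z ≤ v) → (u, v) ∈ D ∨ (u = a ∧ v = b)) ∧
  (∀ d ∈ D, d.1 ∈ C → d.2 ∈ C → ConsecIn C d.1 d.2 ∨ (∀ z ∈ C, d.1 ≤ z ∧ z ≤ d.2))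

def width (t : TernaryTree) : ℕ := 2 * t.internal + 1

lemma internal_eq_zero {t : TernaryTree} : t.internal = 0 ↔ t = leaf := by
  cases t <;> simp [internal]

lemma width_pos (t : TernaryTree) : 1 ≤ width t := by simp only [width]; omega

lemma width_ne_leaf {t : TernaryTree} (h : t ≠ leaf) : 3 ≤ width t := by
  have : t.internal ≠ 0 := fun hc => h (internal_eq_zero.1 hc)
  simp only [width]; omega

lemma width_node (t1 t2 t3 : TernaryTree) :
    width (node t1 t2 t3) = width t1 + width t2 + width t3 := by
  simp [width, internal]; ring

def tD : TernaryTree → ℕ → Finset (ℕ × ℕ)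
  | .leaf, _ => ∅
  | .node t1 t2 t3, a =>
      ((if t1 = .leaf then ∅ else {(a, a + width t1)}) ∪ tD t1 a) ∪
      (((if t2 = .leaf then ∅ else {(a + width t1, a + width t1 + width t2)}) ∪
          tD t2 (a + width t1)) ∪
      ((if t3 = .leaf then ∅ else
          {(a + width t1 + width t2, a + width t1 + width t2 + width t3)}) ∪
          tD t3 (a + width t1 + width t2)))

/-- `tD t a` together with the closing chord (when `t` is not a leaf). -/
def tDp (t : TernaryTree) (a : ℕ) : Finset (ℕ × ℕ) :=
  (if t = leaf then ∅ else {(a, a + width t)}) ∪ tD t a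

lemma tD_node (t1 t2 t3 : TernaryTree) (a : ℕ) :
    tD (node t1 t2 t3) a =
      tDp t1 a ∪ (tDp t2 (a + width t1) ∪ tDp t3 (a + width t1 + width t2)) := rfl

lemma tDp_bounds_of {t : TernaryTree} {a : ℕ} (h : SubI (tD t a) a (a + width t)) :
    ∀ d ∈ tDp t a, a ≤ d.1 ∧ d.1 + 2 ≤ d.2 ∧ d.2 ≤ a + width t := by
  intro d hd
  rcases Finset.mem_union.1 hd with hd | hd
  · split at hd
    · simp at hd
    · next hne =>
      have := width_ne_leaf hne
      simp at hd
      subst hd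
      simp; omega
  · have := h d hd; tauto

lemma tD_subI (t : TernaryTree) (a : ℕ) : SubI (tD t a) a (a + width t) := by
  induction t generalizing a with
  | leaf => intro d hd; simp [tD] at hd
  | node t1 t2 t3 ih1 ih2 ih3 =>
    intro d hd
    rw [tD_node] at hd
    have hw := width_node t1 t2 t3
    have w1 := width_pos t1; have w2 := width_pos t2; have w3 := width_pos t3
    rcases Finset.mem_union.1 hd with hd | hd
    · have := tDp_bounds_of (ih1 a) d hd
      refine ⟨by omega, by omega, by omega, ?_⟩
      rintro ⟨h1, h2⟩; omega
    rcases Finset.mem_union.1 hd with hd | hd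
    · have := tDp_bounds_of (ih2 (a + width t1)) d hd
      refine ⟨by omega, by omega, by omega, ?_⟩
      rintro ⟨h1, h2⟩; omega
    · have := tDp_bounds_of (ih3 (a + width t1 + width t2)) d hd
      refine ⟨by omega, by omega, by omega, ?_⟩
      rintro ⟨h1, h2⟩; omega

lemma tDp_bounds (t : TernaryTree) (a : ℕ) :
    ∀ d ∈ tDp t a, a ≤ d.1 ∧ d.1 + 2 ≤ d.2 ∧ d.2 ≤ a + width t :=
  tDp_bounds_of (tD_subI t a)

lemma NC_union {D E : Finset (ℕ × ℕ)} (hD : NC D) (hE : NC E)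
    (h : ∀ d ∈ D, ∀ e ∈ E,
      d.2 ≤ e.1 ∨ e.2 ≤ d.1 ∨ (d.1 ≤ e.1 ∧ e.2 ≤ d.2) ∨ (e.1 ≤ d.1 ∧ d.2 ≤ e.2)) :
    NC (D ∪ E) := by
  intro d hd e he hc
  obtain ⟨h1, h2, h3⟩ := hc
  rcases Finset.mem_union.1 hd with hd | hd <;> rcases Finset.mem_union.1 he with he | he
  · exact hD d hd e he ⟨h1, h2, h3⟩
  · rcases h d hd e he with h' | h' | h' | h' <;> omega
  · rcases h e he d hd with h' | h' | h' | h' <;> omega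
  · exact hE d hd e he ⟨h1, h2, h3⟩

lemma mem_tDp {t : TernaryTree} {a : ℕ} {d : ℕ × ℕ} :
    d ∈ tDp t a ↔ (t ≠ leaf ∧ d = (a, a + width t)) ∨ d ∈ tD t a := by
  unfold tDp; split <;> simp_all

lemma tDp_nc_of {t : TernaryTree} {a : ℕ} (h : NC (tD t a)) : NC (tDp t a) := by
  intro d hd e he hc
  obtain ⟨h1, h2, h3⟩ := hc
  rcases mem_tDp.1 hd with ⟨_, rfl⟩ | hd <;> rcases mem_tDp.1 he with ⟨_, rfl⟩ | he
  · simp at h1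
  · have := tD_subI t a e he; simp at h1 h2 h3; omega
  · have := tD_subI t a d hd; simp at h1 h2 h3; omega
  · exact h d hd e he ⟨h1, h2, h3⟩

lemma tD_nc (t : TernaryTree) (a : ℕ) : NC (tD t a) := by
  induction t generalizing a with
  | leaf => intro d hd; simp [tD] at hd
  | node t1 t2 t3 ih1 ih2 ih3 =>
    rw [tD_node]
    have b1 := tDp_bounds t1 a
    have b2 := tDp_bounds t2 (a + width t1)
    have b3 := tDp_bounds t3 (a + width t1 + width t2)
    apply NC_union (tDp_nc_of (ih1 a))
    · apply NC_union (tDp_nc_of (ih2 (a + width t1))) (tDp_nc_of (ih3 _))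
      intro d hd e he
      have := b2 d hd; have := b3 e he
      left; omega
    · intro d hd e he
      have := b1 d hd
      rcases Finset.mem_union.1 he with he | he
      · have := b2 e he; left; omega
      · have := b3 e he; left; omega

lemma tDp_card (t : TernaryTree) (a : ℕ) : (tDp t a).card = t.internal := by
  induction t generalizing a with
  | leaf => simp [tDp, tD, internal]
  | node t1 t2 t3 ih1 ih2 ih3 =>
    have b1 := tDp_bounds t1 a
    have b2 := tDp_bounds t2 (a + width t1)
    have b3 := tDp_bounds t3 (a + width t1 + width t2)
    have w1 := width_pos t1; have w2 := width_pos t2; have w3 := width_pos t3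
    have hd23 : Disjoint (tDp t2 (a + width t1)) (tDp t3 (a + width t1 + width t2)) := by
      rw [Finset.disjoint_left]
      intro d h2 h3
      have := b2 d h2; have := b3 d h3; omega
    have hd123 : Disjoint (tDp t1 a)
        (tDp t2 (a + width t1) ∪ tDp t3 (a + width t1 + width t2)) := by
      rw [Finset.disjoint_left]
      intro d h1 h23
      have := b1 d h1
      rcases Finset.mem_union.1 h23 with h | h
      · have := b2 d h; omega
      · have := b3 d h; omega
    have hclose : ∀ (s : TernaryTree) (x : ℕ), (x, x + width s) ∉ tD s x := by
      intro s x hc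
      exact (tD_subI s x _ hc).2.2.2 ⟨rfl, rfl⟩
    have hcard : ∀ (s : TernaryTree) (x : ℕ), (tDp s x).card = (tD s x).card +
        (if s = leaf then 0 else 1) := by
      intro s x
      unfold tDp
      split
      · simp
      · rw [Finset.union_comm, Finset.card_union_of_disjoint (by
          rw [Finset.disjoint_left]; intro d hd hd'
          simp at hd'; subst hd'; exact hclose s x hd)]
        simp
    -- card of tDp (node ...) = 1 + card (tD (node ...))
    have hnode : (tDp (node t1 t2 t3) a).card = (tD (node t1 t2 t3) a).card + 1 := by
      rw [hcard]; simp
    rw [hnode, tD_node, Finset.card_union_of_disjoint hd123,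
      Finset.card_union_of_disjoint hd23, ih1, ih2, ih3]
    simp [internal]; omega

end QDProof3
section QDProof4
open Finset TernaryTree

def cellV (D : Finset (ℕ × ℕ)) (a b : ℕ) : Finset ℕ :=
  (Finset.Icc a b).filter (fun x => ∀ d ∈ D, ¬(d.1 < x ∧ x < d.2))

lemma mem_cellV {D : Finset (ℕ × ℕ)} {a b x : ℕ} :
    x ∈ cellV D a b ↔ (a ≤ x ∧ x ≤ b) ∧ ∀ d ∈ D, ¬(d.1 < x ∧ x < d.2) := by
  unfold cellV; rw [Finset.mem_filter, Finset.mem_Icc]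

lemma chord_from (D : Finset (ℕ × ℕ)) (hN : NC D) {x : ℕ}
    (hc : ∃ d ∈ D, d.1 = x ∧ x < d.2)
    (hvis : ∀ e ∈ D, ¬(e.1 < x ∧ x < e.2)) :
    ∃ w, (x, w) ∈ D ∧ x < w ∧ ∀ e ∈ D, ¬(e.1 < w ∧ w < e.2) := by
  classical
  have hne : (D.filter (fun d => d.1 = x)).Nonempty := by
    obtain ⟨d, hd, h1, h2⟩ := hc
    exact ⟨d, Finset.mem_filter.2 ⟨hd, h1⟩⟩
  obtain ⟨d0, hd0, hmax⟩ := Finset.exists_max_image _ Prod.snd hne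
  obtain ⟨hd0D, hd0x⟩ := Finset.mem_filter.1 hd0
  obtain ⟨dw, hdw, hdw1, hdw2⟩ := hc
  have hwmax : ∀ d ∈ D, d.1 = x → d.2 ≤ d0.2 := by
    intro d hd h1
    exact hmax d (Finset.mem_filter.2 ⟨hd, h1⟩)
  have hxw : x < d0.2 := lt_of_lt_of_le hdw2 (hwmax dw hdw hdw1)
  have hd0eq : d0 = (x, d0.2) := by
    rw [← hd0x]
  refine ⟨d0.2, by rw [← hd0eq]; exact hd0D, hxw, ?_⟩
  intro e he ⟨he1, he2⟩
  rcases lt_trichotomy e.1 x with h | h | h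
  · exact hvis e he ⟨h, lt_trans hxw he2⟩
  · exact absurd (hwmax e he h) (by omega)
  · exact hN d0 hd0D e he ⟨by omega, he1, he2⟩

lemma cellV_mem_a {D : Finset (ℕ × ℕ)} {a b : ℕ} (hab : a ≤ b) (hS : SubI D a b) :
    a ∈ cellV D a b := by
  rw [mem_cellV]
  exact ⟨⟨le_refl a, hab⟩, fun d hd ⟨h1, h2⟩ => by have := hS d hd; omega⟩

lemma cellV_mem_b {D : Finset (ℕ × ℕ)} {a b : ℕ} (hab : a ≤ b) (hS : SubI D a b) :
    b ∈ cellV D a b := by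
  rw [mem_cellV]
  exact ⟨⟨hab, le_refl b⟩, fun d hd ⟨h1, h2⟩ => by have := hS d hd; omega⟩

lemma cellV_isLCell {D : Finset (ℕ × ℕ)} {a b : ℕ} (hab : a + 2 ≤ b)
    (hS : SubI D a b) (hN : NC D) : LCell D a b (cellV D a b) := by
  classical
  have hA := cellV_mem_a (by omega) hS
  have hB := cellV_mem_b (by omega : a ≤ b) hS
  -- step 1 : find an interior visible vertex
  have hmid : ∃ y, a < y ∧ y < b ∧ y ∈ cellV D a b := by
    by_cases h1 : a + 1 ∈ cellV D a b
    · exact ⟨a + 1, by omega, by omega, h1⟩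
    · have hcov : ∃ d ∈ D, d.1 = a ∧ a < d.2 := by
        rw [mem_cellV] at h1
        push_neg at h1
        obtain ⟨d, hd, h2, h3⟩ := h1 ⟨by omega, by omega⟩
        have := hS d hd
        exact ⟨d, hd, by omega, by omega⟩
      obtain ⟨w, hwD, hw1, hw2⟩ := chord_from D hN hcov
        (fun e he ⟨h1', h2'⟩ => by have := hS e he; omega)
      have hwb := (hS _ hwD).2.2
      refine ⟨w, hw1, ?_, ?_⟩
      · simp at hwb; omega
      · rw [mem_cellV]
        exact ⟨⟨by omega, by omega⟩, hw2⟩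
  obtain ⟨y0, hy1, hy2, hy3⟩ := hmid
  have hcard : 3 ≤ (cellV D a b).card := by
    have hsub : ({a, y0, b} : Finset ℕ) ⊆ cellV D a b := by
      intro z hz
      simp at hz
      rcases hz with rfl | rfl | rfl <;> assumption
    calc (3:ℕ) = ({a, y0, b} : Finset ℕ).card := by
          rw [Finset.card_insert_of_notMem (by simp; omega),
            Finset.card_insert_of_notMem (by simp; omega), Finset.card_singleton]
        _ ≤ _ := Finset.card_le_card hsub
  refine ⟨Finset.filter_subset _ _, hcard, ?_, ?_, ?_⟩
  · -- consecutive condition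
    rintro x y ⟨hx, hy, hxy, hgap⟩
    by_cases hy1' : y = x + 1
    · exact Or.inl hy1'
    · right; left
      have hxab := (mem_cellV.1 hx).1
      have hyab := (mem_cellV.1 hy).1
      have hcov : ∃ d ∈ D, d.1 = x ∧ x < d.2 := by
        have hx1 : x + 1 ∉ cellV D a b := by
          intro hmem
          rcases hgap _ hmem with h | h <;> omega
        rw [mem_cellV] at hx1
        push_neg at hx1
        obtain ⟨d, hd, h2, h3⟩ := hx1 ⟨by omega, by omega⟩
        have hvx := (mem_cellV.1 hx).2 d hd
        exact ⟨d, hd, by omega, by omega⟩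
      obtain ⟨w, hwD, hw1, hw2⟩ := chord_from D hN hcov (mem_cellV.1 hx).2
      have hwy : w ≤ y := by
        by_contra hc
        exact (mem_cellV.1 hy).2 _ hwD ⟨hxy, by simp; omega⟩
      rcases eq_or_lt_of_le hwy with rfl | hlt
      · exact hwD
      · exfalso
        have hwmem : w ∈ cellV D a b := by
          rw [mem_cellV]
          have := hS _ hwD
          exact ⟨⟨by omega, by omega⟩, hw2⟩
        rcases hgap _ hwmem with h | h <;> omega
  · -- closing condition
    intro u v hu hv hbet
    right
    have h1 := (hbet a hA).1
    have h2 := (hbet b hB).2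
    have h3 := (mem_cellV.1 hu).1
    have h4 := (mem_cellV.1 hv).1
    omega
  · -- no-subdividing condition
    intro d hd h1 h2
    left
    have hdd := hS d hd
    refine ⟨h1, h2, by omega, fun z hz => ?_⟩
    have := (mem_cellV.1 hz).2 d hd
    omega

lemma card_four {C : Finset ℕ} (h : C.card = 4) {a b : ℕ} (ha : a ∈ C) (hb : b ∈ C)
    (hmin : ∀ z ∈ C, a ≤ z) (hmax : ∀ z ∈ C, z ≤ b) :
    ∃ p q, a < p ∧ p < q ∧ q < b ∧ C = {a, p, q, b} := by
  classical
  have hab : a ≠ b := by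
    intro hc
    subst hc
    have : C ⊆ {a} := fun z hz => by
      simp
      have := hmin z hz; have := hmax z hz; omega
    have := Finset.card_le_card this
    simp at this; omega
  have haltb : a < b := lt_of_le_of_ne (hmin b hb) hab
  have hb' : b ∈ C.erase a := Finset.mem_erase.2 ⟨Ne.symm hab, hb⟩
  have hcard2 : ((C.erase a).erase b).card = 2 := by
    rw [Finset.card_erase_of_mem hb', Finset.card_erase_of_mem ha, h]
  obtain ⟨p', q', hpq', hC'⟩ := Finset.card_eq_two.1 hcard2
  have hmem : ∀ z, z ∈ ((C.erase a).erase b) → z ∈ C ∧ z ≠ a ∧ z ≠ b := by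
    intro z hz
    have h1 := Finset.mem_erase.1 hz
    have h2 := Finset.mem_erase.1 h1.2
    exact ⟨h2.2, h2.1, h1.1⟩
  have hp' := hmem p' (by rw [hC']; simp)
  have hq' := hmem q' (by rw [hC']; simp)
  set p := min p' q'
  set q := max p' q'
  have hpmem : p ∈ C ∧ p ≠ a ∧ p ≠ b := by
    rcases min_choice p' q' with h' | h' <;> rw [show p = min p' q' from rfl, h'] <;> assumption
  have hqmem : q ∈ C ∧ q ≠ a ∧ q ≠ b := by
    rcases max_choice p' q' with h' | h' <;> rw [show q = max p' q' from rfl, h'] <;> assumption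
  have hpq : p < q := by
    rcases lt_trichotomy p' q' with h' | h' | h'
    · simp [p, q]; omega
    · exact absurd h' hpq'
    · simp [p, q]; omega
  have hap : a < p := by have := hmin p hpmem.1; rcases hpmem with ⟨_, h2, _⟩; omega
  have hqb : q < b := by have := hmax q hqmem.1; rcases hqmem with ⟨_, _, h3⟩; omega
  refine ⟨p, q, hap, hpq, hqb, ?_⟩
  have hsub : ({a, p, q, b} : Finset ℕ) ⊆ C := by
    intro z hz
    simp at hz
    rcases hz with rfl | rfl | rfl | rfl
    exacts [ha, hpmem.1, hqmem.1, hb]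
  have hc4 : ({a, p, q, b} : Finset ℕ).card = 4 := by
    rw [Finset.card_insert_of_notMem (by simp; omega),
      Finset.card_insert_of_notMem (by simp; omega),
      Finset.card_insert_of_notMem (by simp; omega), Finset.card_singleton]
  exact (Finset.eq_of_subset_of_card_le hsub (by omega)).symm

lemma LCell_lift {D : Finset (ℕ × ℕ)} {a b a' b' : ℕ} {C : Finset ℕ}
    (ha : a ≤ a') (hb : b' ≤ b)
    (hclose : (a', b') ∈ D ∨ (a' = a ∧ b' = b))
    (h : LCell (D.filter (fun d => a' ≤ d.1 ∧ d.2 ≤ b' ∧ ¬(d.1 = a' ∧ d.2 = b'))) a' b' C) :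
    LCell D a b C := by
  classical
  obtain ⟨hsub, hcard, hconsec, hclosing, hnosub⟩ := h
  have hsub' : C ⊆ Finset.Icc a b := by
    intro z hz
    have := hsub hz
    simp at this ⊢
    omega
  refine ⟨hsub', hcard, ?_, ?_, ?_⟩
  · intro x y hxy
    rcases hconsec x y hxy with h' | h' | ⟨rfl, rfl⟩
    · exact Or.inl h'
    · exact Or.inr (Or.inl (Finset.mem_filter.1 h').1)
    · rcases hclose with h' | ⟨rfl, rfl⟩
      · exact Or.inr (Or.inl h')
      · exact Or.inr (Or.inr ⟨rfl, rfl⟩)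
  · intro u v hu hv hbet
    rcases hclosing u v hu hv hbet with h' | ⟨rfl, rfl⟩
    · exact Or.inl (Finset.mem_filter.1 h').1
    · rcases hclose with h' | ⟨rfl, rfl⟩
      · exact Or.inl h'
      · exact Or.inr ⟨rfl, rfl⟩
  · intro d hd h1 h2
    by_cases hd' : d.1 = a' ∧ d.2 = b'
    · right
      intro z hz
      have := hsub hz
      simp at this
      omega
    · have hd1 := hsub h1
      have hd2 := hsub h2
      simp at hd1 hd2
      exact hnosub d (Finset.mem_filter.2 ⟨hd, by omega, by omega, hd'⟩) h1 h2

end QDProof4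
section QDProof5
open Finset TernaryTree

lemma tDp_sub_node1 (t1 t2 t3 : TernaryTree) (a : ℕ) :
    tDp t1 a ⊆ tD (node t1 t2 t3) a := by
  rw [tD_node]; exact Finset.subset_union_left

lemma tDp_sub_node2 (t1 t2 t3 : TernaryTree) (a : ℕ) :
    tDp t2 (a + width t1) ⊆ tD (node t1 t2 t3) a := by
  rw [tD_node]
  exact Finset.Subset.trans Finset.subset_union_left Finset.subset_union_right

lemma tDp_sub_node3 (t1 t2 t3 : TernaryTree) (a : ℕ) :
    tDp t3 (a + width t1 + width t2) ⊆ tD (node t1 t2 t3) a := by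
  rw [tD_node]
  exact Finset.Subset.trans Finset.subset_union_right Finset.subset_union_right

lemma tD_node_cases {t1 t2 t3 : TernaryTree} {a : ℕ} {d : ℕ × ℕ}
    (hd : d ∈ tD (node t1 t2 t3) a) :
    d ∈ tDp t1 a ∨ d ∈ tDp t2 (a + width t1) ∨ d ∈ tDp t3 (a + width t1 + width t2) := by
  rw [tD_node] at hd
  rcases Finset.mem_union.1 hd with h | h
  · exact Or.inl h
  · exact Or.inr (Finset.mem_union.1 h)

lemma tD_mem_left {t1 t2 t3 : TernaryTree} {a : ℕ} {d : ℕ × ℕ}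
    (hd : d ∈ tD (node t1 t2 t3) a) (h2 : d.2 ≤ a + width t1) : d ∈ tDp t1 a := by
  rcases tD_node_cases hd with h | h | h
  · exact h
  · have := tDp_bounds _ _ _ h; omega
  · have := tDp_bounds _ _ _ h; omega

lemma tD_mem_mid {t1 t2 t3 : TernaryTree} {a : ℕ} {d : ℕ × ℕ}
    (hd : d ∈ tD (node t1 t2 t3) a) (h1 : a + width t1 ≤ d.1)
    (h2 : d.2 ≤ a + width t1 + width t2) : d ∈ tDp t2 (a + width t1) := by
  rcases tD_node_cases hd with h | h | h
  · have := tDp_bounds _ _ _ h; omega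
  · exact h
  · have := tDp_bounds _ _ _ h; omega

lemma tD_mem_right {t1 t2 t3 : TernaryTree} {a : ℕ} {d : ℕ × ℕ}
    (hd : d ∈ tD (node t1 t2 t3) a) (h1 : a + width t1 + width t2 ≤ d.1) :
    d ∈ tDp t3 (a + width t1 + width t2) := by
  rcases tD_node_cases hd with h | h | h
  · have := tDp_bounds _ _ _ h; omega
  · have := tDp_bounds _ _ _ h; omega
  · exact h

lemma tD_no_straddle_p {t1 t2 t3 : TernaryTree} {a : ℕ} {d : ℕ × ℕ}
    (hd : d ∈ tD (node t1 t2 t3) a) : ¬(d.1 < a + width t1 ∧ a + width t1 < d.2) := by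
  rcases tD_node_cases hd with h | h | h <;> · have := tDp_bounds _ _ _ h; omega

lemma tD_no_straddle_q {t1 t2 t3 : TernaryTree} {a : ℕ} {d : ℕ × ℕ}
    (hd : d ∈ tD (node t1 t2 t3) a) :
    ¬(d.1 < a + width t1 + width t2 ∧ a + width t1 + width t2 < d.2) := by
  rcases tD_node_cases hd with h | h | h <;> · have := tDp_bounds _ _ _ h; omega

lemma exists_third {C : Finset ℕ} (h : 3 ≤ C.card) (a b : ℕ) :
    ∃ z ∈ C, z ≠ a ∧ z ≠ b := by
  classical
  by_contra hc
  push_neg at hc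
  have : C ⊆ {a, b} := by
    intro z hz
    simp only [Finset.mem_insert, Finset.mem_singleton]
    by_cases h' : z = a
    · exact Or.inl h'
    · exact Or.inr (hc z hz h')
  have := Finset.card_le_card this
  have : ({a, b} : Finset ℕ).card ≤ 2 := Finset.card_insert_le _ _ |>.trans (by simp)
  omega

lemma consec_around {C : Finset ℕ} {p : ℕ} (hp : p ∉ C)
    (hlo : ∃ z ∈ C, z < p) (hhi : ∃ z ∈ C, p < z) :
    ∃ x y, ConsecIn C x y ∧ x < p ∧ p < y := by
  classical
  obtain ⟨zl, hzl, hzl'⟩ := hlo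
  obtain ⟨zr, hzr, hzr'⟩ := hhi
  have hLne : (C.filter (· < p)).Nonempty := ⟨zl, Finset.mem_filter.2 ⟨hzl, hzl'⟩⟩
  have hRne : (C.filter (p < ·)).Nonempty := ⟨zr, Finset.mem_filter.2 ⟨hzr, hzr'⟩⟩
  set x := (C.filter (· < p)).max' hLne with hx
  set y := (C.filter (p < ·)).min' hRne with hy
  have hxC := Finset.mem_filter.1 ((C.filter (· < p)).max'_mem hLne)
  have hyC := Finset.mem_filter.1 ((C.filter (p < ·)).min'_mem hRne)
  refine ⟨x, y, ⟨hxC.1, hyC.1, by omega, ?_⟩, hxC.2, hyC.2⟩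
  intro z hz
  rcases lt_trichotomy z p with h | h | h
  · exact Or.inl (Finset.le_max' (C.filter (· < p)) z (Finset.mem_filter.2 ⟨hz, h⟩))
  · exact absurd (h ▸ hz) hp
  · exact Or.inr (Finset.min'_le (C.filter (p < ·)) z (Finset.mem_filter.2 ⟨hz, h⟩))

lemma tD_sub_tDp (t : TernaryTree) (a : ℕ) : tD t a ⊆ tDp t a :=
  Finset.subset_union_right

lemma cell_restrict {t : TernaryTree} {x : ℕ} {D : Finset (ℕ × ℕ)} {a b : ℕ}
    {C : Finset ℕ} (hDsub : tD t x ⊆ D)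
    (hmem : ∀ d ∈ D, d.1 ∈ C → d.2 ∈ C → d ∈ tDp t x)
    (hC : C ⊆ Finset.Icc x (x + width t)) (hnab : a ∉ C ∨ b ∉ C)
    (hL : LCell D a b C) : LCell (tD t x) x (x + width t) C := by
  obtain ⟨_, hcard, hconsec, hclosing, hnosub⟩ := hL
  refine ⟨hC, hcard, ?_, ?_, ?_⟩
  · intro u v huv
    rcases hconsec u v huv with h | h | ⟨rfl, rfl⟩
    · exact Or.inl h
    · rcases mem_tDp.1 (hmem _ h huv.1 huv.2.1) with ⟨_, heq⟩ | h'
      · right; right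
        exact ⟨congrArg Prod.fst heq, congrArg Prod.snd heq⟩
      · exact Or.inr (Or.inl h')
    · rcases hnab with h | h
      · exact absurd huv.1 h
      · exact absurd huv.2.1 h
  · intro u v hu hv hbet
    rcases hclosing u v hu hv hbet with h | ⟨rfl, rfl⟩
    · rcases mem_tDp.1 (hmem _ h hu hv) with ⟨_, heq⟩ | h'
      · right
        exact ⟨congrArg Prod.fst heq, congrArg Prod.snd heq⟩
      · exact Or.inl h'
    · rcases hnab with h | h
      · exact absurd hu h
      · exact absurd hv h
  · intro d hd h1 h2
    exact hnosub d (hDsub hd) h1 h2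

theorem tD_cell_card (t : TernaryTree) :
    ∀ a C, LCell (tD t a) a (a + width t) C → C.card = 4 := by
  induction t with
  | leaf =>
    intro a C hL
    exfalso
    obtain ⟨hsub, hcard, _⟩ := hL
    have := Finset.card_le_card hsub
    rw [Nat.card_Icc] at this
    simp [width, internal] at this
    omega
  | node t1 t2 t3 ih1 ih2 ih3 =>
    intro a C hL
    have hw := width_node t1 t2 t3
    have w1 := width_pos t1; have w2 := width_pos t2; have w3 := width_pos t3
    set p := a + width t1 with hp
    set q := a + width t1 + width t2 with hq
    set b := a + width (node t1 t2 t3) with hb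
    have hbq : b = q + width t3 := by omega
    obtain ⟨hsub, hcard, hconsec, hclosing, hnosub⟩ := hL
    have hCne : C.Nonempty := Finset.card_pos.1 (by omega)
    set u := C.min' hCne with hu
    set v := C.max' hCne with hv
    have huC : u ∈ C := C.min'_mem hCne
    have hvC : v ∈ C := C.max'_mem hCne
    have hbet : ∀ z ∈ C, u ≤ z ∧ z ≤ v :=
      fun z hz => ⟨C.min'_le z hz, C.le_max' z hz⟩
    rcases hclosing u v huC hvC hbet with hclose | ⟨hua, hvb⟩
    · -- C lives under some chord (u,v) of the dissection
      have hLfull : LCell (tD (node t1 t2 t3) a) a b C :=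
        ⟨hsub, hcard, hconsec, hclosing, hnosub⟩
      rcases tD_node_cases hclose with h' | h' | h'
      · have hbd := tDp_bounds _ _ _ h'
        have hCsub : C ⊆ Finset.Icc a (a + width t1) := by
          intro z hz
          have h1 := hbet z hz
          have h2 := Finset.mem_Icc.1 (hsub hz)
          simp only [Finset.mem_Icc]
          omega
        refine ih1 a C (cell_restrict
          ((tD_sub_tDp t1 a).trans (tDp_sub_node1 t1 t2 t3 a)) ?_ hCsub ?_ hLfull)
        · intro d hd hd1 hd2
          have := Finset.mem_Icc.1 (hCsub hd2)
          exact tD_mem_left hd (by omega)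
        · right
          intro hbC
          have := Finset.mem_Icc.1 (hCsub hbC)
          omega
      · have hbd := tDp_bounds _ _ _ h'
        have hCsub : C ⊆ Finset.Icc p (p + width t2) := by
          intro z hz
          have h1 := hbet z hz
          simp only [Finset.mem_Icc]
          omega
        refine ih2 p C (cell_restrict
          ((tD_sub_tDp t2 p).trans (tDp_sub_node2 t1 t2 t3 a)) ?_ hCsub ?_ hLfull)
        · intro d hd hd1 hd2
          have ha1 := Finset.mem_Icc.1 (hCsub hd1)
          have ha2 := Finset.mem_Icc.1 (hCsub hd2)
          exact tD_mem_mid hd (by omega) (by omega)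
        · left
          intro haC
          have := Finset.mem_Icc.1 (hCsub haC)
          omega
      · have hbd := tDp_bounds _ _ _ h'
        have hCsub : C ⊆ Finset.Icc q (q + width t3) := by
          intro z hz
          have h1 := hbet z hz
          simp only [Finset.mem_Icc]
          omega
        refine ih3 q C (cell_restrict
          ((tD_sub_tDp t3 q).trans (tDp_sub_node3 t1 t2 t3 a)) ?_ hCsub ?_ hLfull)
        · intro d hd hd1 hd2
          have ha1 := Finset.mem_Icc.1 (hCsub hd1)
          exact tD_mem_right hd (by omega)
        · left
          intro haC
          have := Finset.mem_Icc.1 (hCsub haC)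
          omega
    · -- the cell adjacent to the closing edge (a, b)
      have haC : a ∈ C := hua ▸ huC
      have hbC : b ∈ C := hvb ▸ hvC
      have hicc : ∀ z ∈ C, a ≤ z ∧ z ≤ b := by
        intro z hz
        have := Finset.mem_Icc.1 (hsub hz)
        omega
      have hthird : ∀ x y : ℕ, ConsecIn C x y → ¬(x = a ∧ y = b) := by
        rintro x y hxy ⟨hxa, hyb⟩
        obtain ⟨z, hz, hz1, hz2⟩ := exists_third hcard a b
        rcases hxy.2.2.2 z hz with h | h
        · have := hicc z hz; omega
        · have := hicc z hz; omega
      have hpC : p ∈ C := by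
        by_contra hp'
        obtain ⟨x, y, hxy, hx, hy⟩ := consec_around hp' ⟨a, haC, by omega⟩ ⟨b, hbC, by omega⟩
        rcases hconsec x y hxy with h | h | h
        · omega
        · exact tD_no_straddle_p h ⟨hx, hy⟩
        · exact hthird x y hxy h
      have hqC : q ∈ C := by
        by_contra hq'
        obtain ⟨x, y, hxy, hx, hy⟩ := consec_around hq' ⟨a, haC, by omega⟩ ⟨b, hbC, by omega⟩
        rcases hconsec x y hxy with h | h | h
        · omega
        · exact tD_no_straddle_q h ⟨hx, hy⟩
        · exact hthird x y hxy h
      have hcap : ConsecIn C a p := by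
        by_cases h1 : t1 = leaf
        · have hpa : p = a + 1 := by simp [hp, h1, width, internal]
          exact ⟨haC, hpC, by omega, fun z hz => by omega⟩
        · have hmem : (a, p) ∈ tD (node t1 t2 t3) a :=
            tDp_sub_node1 t1 t2 t3 a (mem_tDp.2 (Or.inl ⟨h1, rfl⟩))
          rcases hnosub _ hmem haC hpC with h | h
          · exact h
          · exfalso
            have := h b hbC
            simp at this
            omega
      have hcpq : ConsecIn C p q := by
        by_cases h1 : t2 = leaf
        · have hpa : q = p + 1 := by simp [hp, hq, h1, width, internal] <;> omega
          exact ⟨hpC, hqC, by omega, fun z hz => by omega⟩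
        · have hmem : (p, q) ∈ tD (node t1 t2 t3) a :=
            tDp_sub_node2 t1 t2 t3 a (mem_tDp.2 (Or.inl ⟨h1, by simp [hp, hq]⟩))
          rcases hnosub _ hmem hpC hqC with h | h
          · exact h
          · exfalso
            have := h a haC
            simp at this
            omega
      have hcqb : ConsecIn C q b := by
        by_cases h1 : t3 = leaf
        · have hpa : b = q + 1 := by simp [hq, hb, h1, width, internal] at * <;> omega
          exact ⟨hqC, hbC, by omega, fun z hz => by omega⟩
        · have hmem : (q, b) ∈ tD (node t1 t2 t3) a :=
            tDp_sub_node3 t1 t2 t3 a (mem_tDp.2 (Or.inl ⟨h1, by simp [hq, hb]; omega⟩))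
          rcases hnosub _ hmem hqC hbC with h | h
          · exact h
          · exfalso
            have := h a haC
            simp at this
            omega
      have hCeq : C = {a, p, q, b} := by
        apply Finset.Subset.antisymm
        · intro z hz
          have h1 := hicc z hz
          have h2 := hcap.2.2.2 z hz
          have h3 := hcpq.2.2.2 z hz
          have h4 := hcqb.2.2.2 z hz
          simp only [Finset.mem_insert, Finset.mem_singleton]
          omega
        · intro z hz
          simp only [Finset.mem_insert, Finset.mem_singleton] at hz
          rcases hz with rfl | rfl | rfl | rfl
          exacts [haC, hpC, hqC, hbC]
      rw [hCeq]
      rw [Finset.card_insert_of_notMem (by simp; omega),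
        Finset.card_insert_of_notMem (by simp; omega),
        Finset.card_insert_of_notMem (by simp; omega), Finset.card_singleton]
section QDProof6
open Finset TernaryTree

lemma width_eq_one {t : TernaryTree} : width t = 1 ↔ t = leaf := by
  rw [← internal_eq_zero]
  simp only [width]
  omega

lemma cellV_tD_node (s1 s2 s3 : TernaryTree) (a p q b : ℕ)
    (hp : p = a + width s1) (hq : q = p + width s2) (hb : b = q + width s3) :
    cellV (tD (node s1 s2 s3) a) a b = {a, p, q, b} := by
  subst hp; subst hq; subst hb
  have hw := width_node s1 s2 s3
  have w1 := width_pos s1; have w2 := width_pos s2; have w3 := width_pos s3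
  have hbw : a + width (node s1 s2 s3) = a + width s1 + width s2 + width s3 := by omega
  ext x
  rw [mem_cellV]
  simp only [Finset.mem_insert, Finset.mem_singleton]
  constructor
  · rintro ⟨⟨hax, hxb⟩, hvis⟩
    by_contra hc
    push_neg at hc
    obtain ⟨hc1, hc2, hc3, hc4⟩ := hc
    have hcase : (a < x ∧ x < a + width s1) ∨
        (a + width s1 < x ∧ x < a + width s1 + width s2) ∨
        (a + width s1 + width s2 < x ∧ x < a + width s1 + width s2 + width s3) := by omega
    rcases hcase with ⟨h1, h2⟩ | ⟨h1, h2⟩ | ⟨h1, h2⟩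
    · by_cases hl : s1 = leaf
      · have := width_eq_one.2 hl; omega
      · exact hvis _ (tDp_sub_node1 s1 s2 s3 a (mem_tDp.2 (Or.inl ⟨hl, rfl⟩))) ⟨h1, h2⟩
    · by_cases hl : s2 = leaf
      · have := width_eq_one.2 hl; omega
      · exact hvis _ (tDp_sub_node2 s1 s2 s3 a (mem_tDp.2 (Or.inl ⟨hl, rfl⟩))) ⟨h1, h2⟩
    · by_cases hl : s3 = leaf
      · have := width_eq_one.2 hl; omega
      · exact hvis _ (tDp_sub_node3 s1 s2 s3 a (mem_tDp.2 (Or.inl ⟨hl, rfl⟩))) ⟨h1, h2⟩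
  · intro hx
    have hsub := tD_subI (node s1 s2 s3) a
    rcases hx with rfl | rfl | rfl | rfl
    · exact ⟨⟨le_refl _, by omega⟩, fun d hd ⟨h1, h2⟩ => by have := hsub d hd; omega⟩
    · exact ⟨⟨by omega, by omega⟩, fun d hd h' => tD_no_straddle_p hd h'⟩
    · exact ⟨⟨by omega, by omega⟩, fun d hd h' => tD_no_straddle_q hd h'⟩
    · exact ⟨⟨by omega, le_refl _⟩, fun d hd ⟨h1, h2⟩ => by have := hsub d hd; omega⟩

theorem main_exu : ∀ (N a b : ℕ) (D : Finset (ℕ × ℕ)), b ≤ a + N → a < b →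
    SubI D a b → NC D → (∀ C, LCell D a b C → C.card = 4) →
    ∃! t : TernaryTree, tD t a = D ∧ a + width t = b := by
  intro N
  induction N with
  | zero => intro a b D h1 h2 _ _ _; omega
  | succ N ih =>
    intro a b D hN hab hS hNC hQ
    by_cases hb1 : b = a + 1
    · have hD : D = ∅ := by
        rw [Finset.eq_empty_iff_forall_notMem]
        intro d hd; have := hS d hd; omega
      refine ⟨leaf, ⟨by rw [hD]; rfl, by
        show a + width leaf = b
        simp only [width, internal]; omega⟩, ?_⟩
      rintro t' ⟨h1, h2⟩
      exact width_eq_one.1 (by omega)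
    · have hb2 : a + 2 ≤ b := by omega
      -- the cell containing the closing edge
      have hL0 := cellV_isLCell hb2 hS hNC
      have hc0 := hQ _ hL0
      obtain ⟨p, q, hap, hpq, hqb, hC0⟩ := card_four hc0
        (cellV_mem_a (by omega) hS) (cellV_mem_b (by omega) hS)
        (fun z hz => (mem_cellV.1 hz).1.1) (fun z hz => (mem_cellV.1 hz).1.2)
      have hpmem : p ∈ cellV D a b := by rw [hC0]; simp
      have hqmem : q ∈ cellV D a b := by rw [hC0]; simp
      have hstp : ∀ d ∈ D, ¬(d.1 < p ∧ p < d.2) := (mem_cellV.1 hpmem).2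
      have hstq : ∀ d ∈ D, ¬(d.1 < q ∧ q < d.2) := (mem_cellV.1 hqmem).2
      obtain ⟨hsub0, hcard0, hconsec0, hclosing0, hnosub0⟩ := hL0
      have hgap1 : ConsecIn (cellV D a b) a p := by
        refine ⟨by rw [hC0]; simp, hpmem, hap, fun z hz => ?_⟩
        rw [hC0] at hz; simp at hz
        rcases hz with rfl | rfl | rfl | rfl <;> omega
      have hgap2 : ConsecIn (cellV D a b) p q := by
        refine ⟨hpmem, hqmem, hpq, fun z hz => ?_⟩
        rw [hC0] at hz; simp at hz
        rcases hz with rfl | rfl | rfl | rfl <;> omega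
      have hgap3 : ConsecIn (cellV D a b) q b := by
        refine ⟨hqmem, by rw [hC0]; simp, hqb, fun z hz => ?_⟩
        rw [hC0] at hz; simp at hz
        rcases hz with rfl | rfl | rfl | rfl <;> omega
      have hapD : p = a + 1 ∨ (a, p) ∈ D := by
        rcases hconsec0 a p hgap1 with h | h | h
        · exact Or.inl h
        · exact Or.inr h
        · omega
      have hpqD : q = p + 1 ∨ (p, q) ∈ D := by
        rcases hconsec0 p q hgap2 with h | h | h
        · exact Or.inl h
        · exact Or.inr h
        · omega
      have hqbD : b = q + 1 ∨ (q, b) ∈ D := by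
        rcases hconsec0 q b hgap3 with h | h | h
        · exact Or.inl h
        · exact Or.inr h
        · omega
      -- the three sub-dissections
      set D1 := D.filter (fun d => a ≤ d.1 ∧ d.2 ≤ p ∧ ¬(d.1 = a ∧ d.2 = p)) with hD1def
      set D2 := D.filter (fun d => p ≤ d.1 ∧ d.2 ≤ q ∧ ¬(d.1 = p ∧ d.2 = q)) with hD2def
      set D3 := D.filter (fun d => q ≤ d.1 ∧ d.2 ≤ b ∧ ¬(d.1 = q ∧ d.2 = b)) with hD3def
      have hSD1 : SubI D1 a p := by
        intro d hd
        obtain ⟨hd1, hd2⟩ := Finset.mem_filter.1 hd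
        have := hS d hd1
        tauto
      have hSD2 : SubI D2 p q := by
        intro d hd
        obtain ⟨hd1, hd2⟩ := Finset.mem_filter.1 hd
        have := hS d hd1
        tauto
      have hSD3 : SubI D3 q b := by
        intro d hd
        obtain ⟨hd1, hd2⟩ := Finset.mem_filter.1 hd
        have := hS d hd1
        tauto
      have hNC1 : NC D1 := fun d hd e he =>
        hNC d (Finset.mem_filter.1 hd).1 e (Finset.mem_filter.1 he).1
      have hNC2 : NC D2 := fun d hd e he =>
        hNC d (Finset.mem_filter.1 hd).1 e (Finset.mem_filter.1 he).1
      have hNC3 : NC D3 := fun d hd e he =>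
        hNC d (Finset.mem_filter.1 hd).1 e (Finset.mem_filter.1 he).1
      have hQ1 : ∀ C, LCell D1 a p C → C.card = 4 := by
        intro C hC
        rcases hapD with h | h
        · exfalso
          have h1 := Finset.card_le_card hC.1
          rw [Nat.card_Icc] at h1
          have := hC.2.1
          omega
        · exact hQ _ (LCell_lift (le_refl a) (by omega) (Or.inl h) hC)
      have hQ2 : ∀ C, LCell D2 p q C → C.card = 4 := by
        intro C hC
        rcases hpqD with h | h
        · exfalso
          have h1 := Finset.card_le_card hC.1
          rw [Nat.card_Icc] at h1
          have := hC.2.1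
          omega
        · exact hQ _ (LCell_lift (by omega) (by omega) (Or.inl h) hC)
      have hQ3 : ∀ C, LCell D3 q b C → C.card = 4 := by
        intro C hC
        rcases hqbD with h | h
        · exfalso
          have h1 := Finset.card_le_card hC.1
          rw [Nat.card_Icc] at h1
          have := hC.2.1
          omega
        · exact hQ _ (LCell_lift (by omega) (le_refl b) (Or.inl h) hC)
      obtain ⟨t1, ⟨hT1, hw1⟩, hU1⟩ := ih a p D1 (by omega) hap hSD1 hNC1 hQ1
      obtain ⟨t2, ⟨hT2, hw2⟩, hU2⟩ := ih p q D2 (by omega) hpq hSD2 hNC2 hQ2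
      obtain ⟨t3, ⟨hT3, hw3⟩, hU3⟩ := ih q b D3 (by omega) hqb hSD3 hNC3 hQ3
      -- the candidate tree
      have hwnode : a + width (node t1 t2 t3) = b := by
        have := width_node t1 t2 t3
        omega
      have hTeq : tD (node t1 t2 t3) a = D := by
        apply Finset.Subset.antisymm
        · intro d hd
          rcases tD_node_cases hd with h | h | h
          · rcases mem_tDp.1 h with ⟨hne, rfl⟩ | h'
            · have h3 : width t1 ≠ 1 := fun hc => hne (width_eq_one.1 hc)
              rcases hapD with h' | h'
              · omega
              · have : (a, a + width t1) = (a, p) := by rw [Prod.mk.injEq]; omega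
                rw [this]; exact h'
            · rw [hT1] at h'
              exact (Finset.mem_filter.1 h').1
          · rcases mem_tDp.1 h with ⟨hne, rfl⟩ | h'
            · have h3 : width t2 ≠ 1 := fun hc => hne (width_eq_one.1 hc)
              rcases hpqD with h' | h'
              · omega
              · have : (a + width t1, a + width t1 + width t2) = (p, q) := by
                  rw [Prod.mk.injEq]; omega
                rw [this]; exact h'
            · rw [hw1, hT2] at h'
              exact (Finset.mem_filter.1 h').1
          · rcases mem_tDp.1 h with ⟨hne, rfl⟩ | h'
            · have h3 : width t3 ≠ 1 := fun hc => hne (width_eq_one.1 hc)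
              rcases hqbD with h' | h'
              · omega
              · have : (a + width t1 + width t2, a + width t1 + width t2 + width t3)
                    = (q, b) := by rw [Prod.mk.injEq]; omega
                rw [this]; exact h'
            · rw [show a + width t1 + width t2 = q by omega, hT3] at h'
              exact (Finset.mem_filter.1 h').1
        · intro d hd
          have hsd := hS d hd
          have h1 := hstp d hd
          have h2 := hstq d hd
          have hcase : d.2 ≤ p ∨ (p ≤ d.1 ∧ d.2 ≤ q) ∨ q ≤ d.1 := by omega
          rcases hcase with h | ⟨ha', h⟩ | h
          · by_cases hdc : d.1 = a ∧ d.2 = p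
            · apply tDp_sub_node1 t1 t2 t3 a
              apply mem_tDp.2
              left
              have hw : width t1 = p - a := by omega
              refine ⟨fun hc => ?_, ?_⟩
              · rw [hc] at hw; simp [width, internal] at hw; omega
              · have : d = (d.1, d.2) := rfl
                rw [this, hdc.1, hdc.2, Prod.mk.injEq]
                omega
            · apply tDp_sub_node1 t1 t2 t3 a
              apply tD_sub_tDp
              rw [hT1]
              exact Finset.mem_filter.2 ⟨hd, by omega, by omega, hdc⟩
          · by_cases hdc : d.1 = p ∧ d.2 = q
            · apply tDp_sub_node2 t1 t2 t3 a
              apply mem_tDp.2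
              left
              have hw : width t2 = q - p := by omega
              refine ⟨fun hc => ?_, ?_⟩
              · rw [hc] at hw; simp [width, internal] at hw; omega
              · have : d = (d.1, d.2) := rfl
                rw [this, hdc.1, hdc.2, Prod.mk.injEq]
                omega
            · apply tDp_sub_node2 t1 t2 t3 a
              apply tD_sub_tDp
              rw [hw1, hT2]
              exact Finset.mem_filter.2 ⟨hd, by omega, by omega, hdc⟩
          · by_cases hdc : d.1 = q ∧ d.2 = b
            · apply tDp_sub_node3 t1 t2 t3 a
              apply mem_tDp.2
              left
              have hw : width t3 = b - q := by omega
              refine ⟨fun hc => ?_, ?_⟩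
              · rw [hc] at hw; simp [width, internal] at hw; omega
              · have : d = (d.1, d.2) := rfl
                rw [this, hdc.1, hdc.2, Prod.mk.injEq]
                omega
            · apply tDp_sub_node3 t1 t2 t3 a
              apply tD_sub_tDp
              rw [show a + width t1 + width t2 = q by omega, hT3]
              exact Finset.mem_filter.2 ⟨hd, by omega, by omega, hdc⟩
      refine ⟨node t1 t2 t3, ⟨hTeq, hwnode⟩, ?_⟩
      rintro t' ⟨hD', hw'⟩
      cases t' with
      | leaf =>
        exfalso
        simp only [width, internal] at hw'
        omega
      | node s1 s2 s3 =>
        have hv1 := width_pos s1; have hv2 := width_pos s2; have hv3 := width_pos s3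
        have hwn' := width_node s1 s2 s3
        have hroot := cellV_tD_node s1 s2 s3 a (a + width s1) (a + width s1 + width s2) b
          rfl rfl (by omega)
        rw [hD'] at hroot
        rw [hC0] at hroot
        -- identify the two middle vertices
        have hmem1 : a + width s1 = a ∨ a + width s1 = p ∨ a + width s1 = q ∨
            a + width s1 = b := by
          have : a + width s1 ∈ ({a, p, q, b} : Finset ℕ) := by rw [hroot]; simp
          simpa using this
        have hmem2 : a + width s1 + width s2 = a ∨ a + width s1 + width s2 = p ∨
            a + width s1 + width s2 = q ∨ a + width s1 + width s2 = b := by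
          have : a + width s1 + width s2 ∈ ({a, p, q, b} : Finset ℕ) := by rw [hroot]; simp
          simpa using this
        have hmemp : p = a ∨ p = a + width s1 ∨ p = a + width s1 + width s2 ∨ p = b := by
          have : p ∈ ({a, a + width s1, a + width s1 + width s2, b} : Finset ℕ) := by
            rw [← hroot]; simp
          simpa using this
        have hmemq : q = a ∨ q = a + width s1 ∨ q = a + width s1 + width s2 ∨ q = b := by
          have : q ∈ ({a, a + width s1, a + width s1 + width s2, b} : Finset ℕ) := by
            rw [← hroot]; simp
          simpa using this
        have hps : a + width s1 = p := by omega
        have hqs : a + width s1 + width s2 = q := by omega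
        -- identify the sub-dissections
        have hsub1 : tD s1 a = D1 := by
          apply Finset.Subset.antisymm
          · intro d hd
            have hb1 := tD_subI s1 a d hd
            refine Finset.mem_filter.2 ⟨?_, by omega, by omega, ?_⟩
            · rw [← hD']
              exact tDp_sub_node1 s1 s2 s3 a (tD_sub_tDp s1 a hd)
            · rintro ⟨hx, hy⟩
              exact hb1.2.2.2 ⟨hx, by omega⟩
          · intro d hd
            obtain ⟨hdD, hx1, hx2, hx3⟩ := Finset.mem_filter.1 hd
            rw [← hD'] at hdD
            rcases tD_node_cases hdD with h | h | h
            · rcases mem_tDp.1 h with ⟨_, rfl⟩ | h'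
              · simp at hx3
                omega
              · exact h'
            · have := tDp_bounds _ _ _ h
              omega
            · have := tDp_bounds _ _ _ h
              omega
        have hsub2 : tD s2 p = D2 := by
          apply Finset.Subset.antisymm
          · intro d hd
            have hb1 := tD_subI s2 p d hd
            refine Finset.mem_filter.2 ⟨?_, by omega, by omega, ?_⟩
            · rw [← hD']
              apply tDp_sub_node2 s1 s2 s3 a
              rw [hps]
              exact tD_sub_tDp s2 p hd
            · rintro ⟨hx, hy⟩
              exact hb1.2.2.2 ⟨hx, by omega⟩
          · intro d hd
            obtain ⟨hdD, hx1, hx2, hx3⟩ := Finset.mem_filter.1 hd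
            rw [← hD'] at hdD
            rcases tD_node_cases hdD with h | h | h
            · have := tDp_bounds _ _ _ h
              omega
            · rw [hps] at h
              rcases mem_tDp.1 h with ⟨_, rfl⟩ | h'
              · simp at hx3
                omega
              · exact h'
            · have := tDp_bounds _ _ _ h
              omega
        have hsub3 : tD s3 q = D3 := by
          apply Finset.Subset.antisymm
          · intro d hd
            have hb1 := tD_subI s3 q d hd
            refine Finset.mem_filter.2 ⟨?_, by omega, by omega, ?_⟩
            · rw [← hD']
              apply tDp_sub_node3 s1 s2 s3 a
              rw [hqs]
              exact tD_sub_tDp s3 q hd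
            · rintro ⟨hx, hy⟩
              exact hb1.2.2.2 ⟨hx, by omega⟩
          · intro d hd
            obtain ⟨hdD, hx1, hx2, hx3⟩ := Finset.mem_filter.1 hd
            rw [← hD'] at hdD
            rcases tD_node_cases hdD with h | h | h
            · have := tDp_bounds _ _ _ h
              omega
            · have := tDp_bounds _ _ _ h
              omega
            · rw [hqs] at h
              rcases mem_tDp.1 h with ⟨_, rfl⟩ | h'
              · simp at hx3
                omega
              · exact h'
        have he1 : s1 = t1 := hU1 s1 ⟨hsub1, by omega⟩
        have he2 : s2 = t2 := hU2 s2 ⟨by rw [← hps] at hsub2 ⊢; exact hsub2, by omega⟩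
        have he3 : s3 = t3 := hU3 s3 ⟨by rw [← hqs] at hsub3 ⊢; exact hsub3, by omega⟩
        rw [he1, he2, he3]

end QDProof6
section QDProof7
open Finset TernaryTree

lemma isCell_iff {m : ℕ} (hm : 1 ≤ m) {D : Finset (Fin m × Fin m)}
    (hord : ∀ d ∈ D, d.1 < d.2) (C : Finset (Fin m)) :
    IsCell m D C ↔
      LCell (D.image (fun d => (d.1.val, d.2.val))) 0 (m - 1) (C.image Fin.val) := by
  classical
  set Dv := D.image (fun d => (d.1.val, d.2.val)) with hDvdef
  set Cv := C.image Fin.val with hCvdef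
  have hcardCv : Cv.card = C.card := Finset.card_image_of_injective C Fin.val_injective
  have hmemCv : ∀ (xf : Fin m), xf.val ∈ Cv ↔ xf ∈ C := by
    intro xf
    constructor
    · intro h
      obtain ⟨yf, hy, hv⟩ := Finset.mem_image.1 h
      rwa [← Fin.val_injective hv]
    · intro h; exact Finset.mem_image.2 ⟨xf, h, rfl⟩
  have hmemDv : ∀ (xf yf : Fin m), (xf.val, yf.val) ∈ Dv ↔ (xf, yf) ∈ D := by
    intro xf yf
    constructor
    · intro h
      obtain ⟨d, hd, heq⟩ := Finset.mem_image.1 h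
      have e1 : d.1 = xf := Fin.val_injective (congrArg Prod.fst heq)
      have e2 : d.2 = yf := Fin.val_injective (congrArg Prod.snd heq)
      rw [← e1, ← e2]; exact hd
    · intro h; exact Finset.mem_image.2 ⟨(xf, yf), h, rfl⟩
  constructor
  · rintro ⟨hcard, hcond2, hcond3⟩
    refine ⟨?_, by omega, ?_, ?_, ?_⟩
    · intro x hx
      obtain ⟨xf, hxf, rfl⟩ := Finset.mem_image.1 hx
      have := xf.isLt
      simp only [Finset.mem_Icc]
      omega
    · rintro x y ⟨hx, hy, hxy, hgap⟩
      obtain ⟨xf, hxf, rfl⟩ := Finset.mem_image.1 hx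
      obtain ⟨yf, hyf, rfl⟩ := Finset.mem_image.1 hy
      have hsucc : SuccIn m C xf yf := (succIn_iff C xf yf).2
        ⟨hxf, hyf, Or.inl ⟨hxy, fun z hz => hgap z.val (Finset.mem_image.2 ⟨z, hz, rfl⟩)⟩⟩
      rcases hcond2 xf yf hsucc with h | h | h
      · left; rw [arcd_eq_of_le hxy.le] at h; omega
      · right; left; exact (hmemDv _ _).2 h
      · exfalso
        have := Fin.lt_def.1 (hord _ h)
        simp at this
        omega
    · intro u v hu hv hbet
      obtain ⟨uf, huf, rfl⟩ := Finset.mem_image.1 hu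
      obtain ⟨vf, hvf, rfl⟩ := Finset.mem_image.1 hv
      have huvle : uf.val ≤ vf.val := (hbet uf.val hu).2
      have hCvcard : 3 ≤ Cv.card := by omega
      have huv : uf.val < vf.val := by
        rcases eq_or_lt_of_le huvle with h | h
        · exfalso
          obtain ⟨z, hz, hz1, hz2⟩ := exists_third hCvcard uf.val vf.val
          have := hbet z hz
          omega
        · exact h
      have hsucc : SuccIn m C vf uf := (succIn_iff C vf uf).2
        ⟨hvf, huf, Or.inr ⟨huv,
          fun z hz => (hbet z.val (Finset.mem_image.2 ⟨z, hz, rfl⟩)).1,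
          fun z hz => (hbet z.val (Finset.mem_image.2 ⟨z, hz, rfl⟩)).2⟩⟩
      rcases hcond2 vf uf hsucc with h | h | h
      · right
        rw [arcd_eq_of_gt huv] at h
        have h1 := vf.isLt
        constructor <;> omega
      · exfalso
        have := Fin.lt_def.1 (hord _ h)
        simp at this
        omega
      · left; exact (hmemDv _ _).2 h
    · intro d hd h1 h2
      obtain ⟨dd, hdd, rfl⟩ := Finset.mem_image.1 hd
      have h1' : dd.1 ∈ C := (hmemCv dd.1).1 h1
      have h2' : dd.2 ∈ C := (hmemCv dd.2).1 h2
      have hlt := Fin.lt_def.1 (hord dd hdd)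
      rcases hcond3 dd hdd h1' h2' with h | h
      · left
        obtain ⟨_, _, hcase⟩ := (succIn_iff C dd.1 dd.2).1 h
        rcases hcase with ⟨hxy, hgap⟩ | ⟨hxy, _, _⟩
        · refine ⟨h1, h2, hxy, fun z hz => ?_⟩
          obtain ⟨zf, hzf, rfl⟩ := Finset.mem_image.1 hz
          exact hgap zf hzf
        · omega
      · right
        obtain ⟨_, _, hcase⟩ := (succIn_iff C dd.2 dd.1).1 h
        rcases hcase with ⟨hxy, _⟩ | ⟨_, hmin, hmax⟩
        · omega
        · intro z hz
          obtain ⟨zf, hzf, rfl⟩ := Finset.mem_image.1 hz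
          exact ⟨hmin zf hzf, hmax zf hzf⟩
  · rintro ⟨hsubv, hcardv, hconsecv, hclosingv, hnosubv⟩
    refine ⟨by omega, ?_, ?_⟩
    · intro xf yf hsucc
      obtain ⟨hxf, hyf, hcase⟩ := (succIn_iff C xf yf).1 hsucc
      rcases hcase with ⟨hlt, hgap⟩ | ⟨hlt, hmin, hmax⟩
      · have hcons : ConsecIn Cv xf.val yf.val :=
          ⟨(hmemCv _).2 hxf, (hmemCv _).2 hyf, hlt, fun z hz => by
            obtain ⟨zf, hzf, rfl⟩ := Finset.mem_image.1 hz
            exact hgap zf hzf⟩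
        rcases hconsecv _ _ hcons with h | h | h
        · left; rw [arcd_eq_of_le hlt.le]; omega
        · right; left; exact (hmemDv _ _).1 h
        · exfalso
          obtain ⟨h0, h1⟩ := h
          have hsub2 : Cv ⊆ {xf.val, yf.val} := by
            intro z hz
            obtain ⟨zf, hzf, hzeq⟩ := Finset.mem_image.1 hz
            have hzb := zf.isLt
            rcases hcons.2.2.2 z hz with h' | h' <;>
              simp only [Finset.mem_insert, Finset.mem_singleton] <;> omega
          have hle := Finset.card_le_card hsub2
          have h2 : ({xf.val, yf.val} : Finset ℕ).card ≤ 2 :=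
            (Finset.card_insert_le _ _).trans (by simp)
          omega
      · have hbet : ∀ z ∈ Cv, yf.val ≤ z ∧ z ≤ xf.val := by
          intro z hz
          obtain ⟨zf, hzf, rfl⟩ := Finset.mem_image.1 hz
          exact ⟨hmin zf hzf, hmax zf hzf⟩
        rcases hclosingv yf.val xf.val ((hmemCv _).2 hyf) ((hmemCv _).2 hxf) hbet with h | h
        · right; right; exact (hmemDv _ _).1 h
        · left
          rw [arcd_eq_of_gt hlt]
          have := xf.isLt
          omega
    · intro d hd h1 h2
      have hlt := Fin.lt_def.1 (hord d hd)
      have hdv : (d.1.val, d.2.val) ∈ Dv := Finset.mem_image.2 ⟨d, hd, rfl⟩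
      rcases hnosubv _ hdv ((hmemCv _).2 h1) ((hmemCv _).2 h2) with h | h
      · left
        refine (succIn_iff C d.1 d.2).2 ⟨h1, h2, Or.inl ⟨hlt, fun z hz => ?_⟩⟩
        exact h.2.2.2 z.val (Finset.mem_image.2 ⟨z, hz, rfl⟩)
      · right
        refine (succIn_iff C d.2 d.1).2 ⟨h2, h1, Or.inr ⟨hlt, fun z hz => ?_, fun z hz => ?_⟩⟩
        · exact (h z.val (Finset.mem_image.2 ⟨z, hz, rfl⟩)).1
        · exact (h z.val (Finset.mem_image.2 ⟨z, hz, rfl⟩)).2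

end QDProof7
section QDProof8
open Finset TernaryTree

lemma tD_card (t : TernaryTree) (a : ℕ) : (tD t a).card = t.internal - 1 := by
  by_cases h : t = leaf
  · subst h; simp [tD, internal]
  · have h1 := tDp_card t a
    have h2 : tDp t a = insert (a, a + width t) (tD t a) := by
      unfold tDp; rw [if_neg h, Finset.insert_eq]
    have h3 : (a, a + width t) ∉ tD t a := fun hc => (tD_subI t a _ hc).2.2.2 ⟨rfl, rfl⟩
    rw [h2, Finset.card_insert_of_notMem h3] at h1
    omega

theorem qdiss_equiv_ternary' (n : ℕ) (hn : 1 ≤ n) :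
    Nonempty (QDiss n ≃ {t : TernaryTree // t.internal = n - 1}) := by
  classical
  have hm : 0 < 2 * n := by omega
  let toF : ℕ × ℕ → Fin (2 * n) × Fin (2 * n) := fun d =>
    (⟨d.1 % (2 * n), Nat.mod_lt _ hm⟩, ⟨d.2 % (2 * n), Nat.mod_lt _ hm⟩)
  let toV : Fin (2 * n) × Fin (2 * n) → ℕ × ℕ := fun d => (d.1.val, d.2.val)
  -- basic facts about `tD t 0` for a tree with `n - 1` internal vertices
  have hwidth : ∀ t : TernaryTree, t.internal = n - 1 → width t = 2 * n - 1 := by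
    intro t ht; simp only [width, ht]; omega
  have hbounds : ∀ (t : TernaryTree), t.internal = n - 1 → ∀ d ∈ tD t 0,
      (toF d).1.val = d.1 ∧ (toF d).2.val = d.2 ∧ d.1 + 2 ≤ d.2 ∧ d.2 ≤ 2 * n - 1 ∧
      ¬(d.1 = 0 ∧ d.2 = 2 * n - 1) := by
    intro t ht d hd
    have hs := tD_subI t 0 d hd
    have hw := hwidth t ht
    rw [hw] at hs
    refine ⟨Nat.mod_eq_of_lt (by omega), Nat.mod_eq_of_lt (by omega), by omega, by omega, ?_⟩
    rintro ⟨h1, h2⟩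
    exact hs.2.2.2 ⟨h1, by omega⟩
  have hOrd : ∀ (t : TernaryTree), t.internal = n - 1 →
      ∀ e ∈ (tD t 0).image toF, e.1 < e.2 := by
    intro t ht e he
    obtain ⟨d, hd, rfl⟩ := Finset.mem_image.1 he
    have h := hbounds t ht d hd
    rw [Fin.lt_def]
    omega
  have hQcellN : ∀ (t : TernaryTree), t.internal = n - 1 →
      ∀ C, LCell (tD t 0) 0 (2 * n - 1) C → C.card = 4 := by
    intro t ht C hC
    have hw := hwidth t ht
    exact tD_cell_card t 0 C (by rw [show 0 + width t = 2 * n - 1 by omega]; exact hC)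
  have hRound : ∀ (t : TernaryTree), t.internal = n - 1 →
      ((tD t 0).image toF).image toV = tD t 0 := by
    intro t ht
    rw [Finset.image_image]
    have : ∀ d ∈ tD t 0, (toV ∘ toF) d = id d := by
      intro d hd
      have h := hbounds t ht d hd
      simp only [Function.comp, toV, toF, id]
      rw [Prod.mk.injEq]
      exact ⟨h.1, h.2.1⟩
    rw [Finset.image_congr this, Finset.image_id]
  -- the five fields of a `QDiss`
  have hDiag : ∀ (t : TernaryTree), t.internal = n - 1 →
      ∀ e ∈ (tD t 0).image toF, IsPolyDiagonal (2 * n) e := by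
    intro t ht e he
    obtain ⟨d, hd, rfl⟩ := Finset.mem_image.1 he
    obtain ⟨hv1, hv2, h2, h3, h4⟩ := hbounds t ht d hd
    refine ⟨?_, ?_, ?_⟩
    · rw [arcd_eq_of_le (by omega)]; omega
    · rw [arcd_eq_of_le (by omega)]; omega
    · rw [arcd_eq_of_gt (by omega)]; omega
  have hCross : ∀ (t : TernaryTree), t.internal = n - 1 →
      ∀ e1 ∈ (tD t 0).image toF, ∀ e2 ∈ (tD t 0).image toF, ¬ Crosses (2 * n) e1 e2 := by
    intro t ht e1 he1 e2 he2 hc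
    obtain ⟨d1, hd1, rfl⟩ := Finset.mem_image.1 he1
    obtain ⟨d2, hd2, rfl⟩ := Finset.mem_image.1 he2
    obtain ⟨ha1, ha2, ha3, ha4, _⟩ := hbounds t ht d1 hd1
    obtain ⟨hb1, hb2, hb3, hb4, _⟩ := hbounds t ht d2 hd2
    have hn1 := tD_nc t 0 d1 hd1 d2 hd2
    have hn2 := tD_nc t 0 d2 hd2 d1 hd1
    have ha1' := ha1; have ha2' := ha2; have hb1' := hb1; have hb2' := hb2
    simp only [toF] at ha1' ha2' hb1' hb2' 
    unfold LCross at hn1 hn2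
    rcases (crosses_iff (by omega) (by omega)).1 hc with h | h <;> unfold LCross at h <;>
      simp only at h <;> omega
  have hCard : ∀ (t : TernaryTree), t.internal = n - 1 →
      ((tD t 0).image toF).card = n - 2 := by
    intro t ht
    rw [Finset.card_image_of_injOn, tD_card, ht]
    · omega
    · intro d hd e he heq
      obtain ⟨ha1, ha2, _⟩ := hbounds t ht d hd
      obtain ⟨hb1, hb2, _⟩ := hbounds t ht e he
      have h1 : (toF d).1.val = (toF e).1.val := by rw [heq]
      have h2 : (toF d).2.val = (toF e).2.val := by rw [heq]
      rw [Prod.ext_iff]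
      constructor <;> omega
  have hQuad : ∀ (t : TernaryTree), t.internal = n - 1 →
      ∀ C : Finset (Fin (2 * n)), IsCell (2 * n) ((tD t 0).image toF) C → C.card = 4 := by
    intro t ht C hC
    have h1 := (isCell_iff (by omega) (hOrd t ht) C).1 hC
    rw [hRound t ht] at h1
    have h2 := hQcellN t ht _ h1
    rwa [Finset.card_image_of_injective C Fin.val_injective] at h2
  -- properties of the diagonal set of a `QDiss`
  have hSubQ : ∀ Q : QDiss n, SubI (Q.diags.image toV) 0 (2 * n - 1) := by
    intro Q d' hd'
    obtain ⟨d, hd, rfl⟩ := Finset.mem_image.1 hd'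
    have hlt := Fin.lt_def.1 (Q.ord d hd)
    obtain ⟨h0, h1, h2⟩ := Q.isDiag d hd
    rw [arcd_eq_of_le (le_of_lt hlt)] at h1
    rw [arcd_eq_of_gt hlt] at h2
    have hv1 := d.1.isLt
    have hv2 := d.2.isLt
    simp only [toV]
    refine ⟨by omega, by omega, by omega, ?_⟩
    rintro ⟨hx, hy⟩
    omega
  have hNCQ : ∀ Q : QDiss n, NC (Q.diags.image toV) := by
    intro Q d' hd' e' he' hc
    obtain ⟨d, hd, rfl⟩ := Finset.mem_image.1 hd'
    obtain ⟨e, he, rfl⟩ := Finset.mem_image.1 he'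
    have h1 := Fin.lt_def.1 (Q.ord d hd)
    have h2 := Fin.lt_def.1 (Q.ord e he)
    exact Q.noncross d hd e he ((crosses_iff h1 h2).2 (Or.inl hc))
  have hQQ : ∀ Q : QDiss n, ∀ C', LCell (Q.diags.image toV) 0 (2 * n - 1) C' →
      C'.card = 4 := by
    intro Q C' hC'
    have hlt : ∀ x ∈ C', x < 2 * n := by
      intro x hx
      have := hC'.1 hx
      simp only [Finset.mem_Icc] at this
      omega
    have himg : (C'.attachFin hlt).image Fin.val = C' := by
      ext x
      constructor
      · intro hx
        obtain ⟨xf, hxf, rfl⟩ := Finset.mem_image.1 hx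
        exact (Finset.mem_attachFin hlt).1 hxf
      · intro hx
        exact Finset.mem_image.2 ⟨⟨x, hlt x hx⟩, (Finset.mem_attachFin hlt).2 hx, rfl⟩
    have hIC : IsCell (2 * n) Q.diags (C'.attachFin hlt) := by
      apply (isCell_iff (by omega) Q.ord (C'.attachFin hlt)).2
      have : Q.diags.image (fun d => (d.1.val, d.2.val)) = Q.diags.image toV := rfl
      rw [this, himg]
      exact hC'
    have := Q.quad _ hIC
    rwa [← himg, Finset.card_image_of_injective _ Fin.val_injective]
  have hback : ∀ Q : QDiss n, (Q.diags.image toV).image toF = Q.diags := by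
    intro Q
    rw [Finset.image_image]
    have : ∀ d ∈ Q.diags, (toF ∘ toV) d = id d := by
      intro d hd
      simp only [Function.comp, toF, toV, id]
      rw [Prod.ext_iff]
      constructor <;> · apply Fin.ext; simp [Nat.mod_eq_of_lt (Fin.isLt _)]
    rw [Finset.image_congr this, Finset.image_id]
  have hqext : ∀ (Q1 Q2 : QDiss n), Q1.diags = Q2.diags → Q1 = Q2 := by
    rintro ⟨d1, p1, p2, p3, p4, p5⟩ ⟨d2, r1, r2, r3, r4, r5⟩ h
    dsimp at h
    subst h
    rfl
  -- the bijection
  refine ⟨(Equiv.ofBijective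
    (fun tt : {t : TernaryTree // t.internal = n - 1} =>
      (⟨(tD tt.1 0).image toF, hOrd tt.1 tt.2, hDiag tt.1 tt.2, hCross tt.1 tt.2,
        hCard tt.1 tt.2, hQuad tt.1 tt.2⟩ : QDiss n)) ⟨?_, ?_⟩).symm⟩
  · -- injective
    intro a b heq
    have h2 : (tD a.1 0).image toF = (tD b.1 0).image toF := congrArg QDiss.diags heq
    have h3 : tD a.1 0 = tD b.1 0 := by
      rw [← hRound a.1 a.2, ← hRound b.1 b.2, h2]
    obtain ⟨T, hT, hU⟩ := main_exu (2 * n - 1) 0 (2 * n - 1) (tD a.1 0) (by omega)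
      (by omega) (by have := tD_subI a.1 0; rwa [show 0 + width a.1 = 2 * n - 1 by
        have := hwidth a.1 a.2; omega] at this)
      (tD_nc a.1 0) (hQcellN a.1 a.2)
    have ha : a.1 = T := hU a.1 ⟨rfl, by have := hwidth a.1 a.2; omega⟩
    have hb : b.1 = T := hU b.1 ⟨h3.symm, by have := hwidth b.1 b.2; omega⟩
    exact Subtype.ext (ha.trans hb.symm)
  · -- surjective
    intro Q
    obtain ⟨t, ⟨htD, htw⟩, _⟩ := main_exu (2 * n - 1) 0 (2 * n - 1) (Q.diags.image toV)
      (by omega) (by omega) (hSubQ Q) (hNCQ Q) (hQQ Q)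
    have ht : t.internal = n - 1 := by
      simp only [width] at htw
      omega
    refine ⟨⟨t, ht⟩, hqext _ _ ?_⟩
    show (tD t 0).image toF = Q.diags
    rw [htD, hback]

end QDProof8

/-- There is a bijection between quadrangular dissections of a convex `2n`-gon
and ternary trees with `n - 1` internal vertices. -/
theorem qdiss_equiv_ternary (n : ℕ) (hn : 1 ≤ n) :
    Nonempty (QDiss n ≃ {t : TernaryTree // t.internal = n - 1}) :=
  qdiss_equiv_ternary' n hn
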